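/- Assume additionally 1 ≤ c ≤ p−2, 0 ≤ m ≤ p−1 and (b, m) ≠ (p, 0). If b ≤ m ≤ l ≤ p+b−c and 1 ≤ j ≤ c−1, then ν_p( C(r−l, b−m+j(p−1)) ) = 1 and, after clearing the unit denominators, C(p+b−m−c, l−m) · C(p+b−m−1, c−1) · C(r−l, b−m+j(p−1)) ≡ (−1)^{l−m} · p · C(p+b−m−1, j−1) · C(p−1+m−l, c−1−j) modulo p^2. (Here C(p+b−m−c, l−m) and C(p+b−m−1, c−1) are units modulo p.) -/

import Mathlib

/-!
Put `A = m - b`, `S = l - m`, `J = j - 1`, `I = c - 1 - j` and `G = p + b - c - l`, all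
nonnegative with `p = A + S + G + J + I + 2`. Then `r - l = N p + G` and
`b - m + j(p - 1) = J p + k₀` with `N = Q p + J + I + 1`, `k₀ = S + G + I + 1` and
`G < k₀ < p`.

Vandermonde over the last digit, together with the absorption identity and Lucas' theorem for
`C(N p, K p + e)`, `0 < e < p`, gives
`C(N p + G, K p + k₀) ≡ N C(N - 1, K) C(p + G, k₀) (mod p²)`.
The last factor is `p` times a unit, since `C(p + G, k₀) k₀! (p + G - k₀)! = (p + G)!` and
`(p + G)! / p ≡ (p - 1)! G! ≡ -G! (mod p)`. This gives `ν_p = 1`, and the congruence becomes an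
identity between units mod `p`, which reduces to the reflected Wilson formula
`k! (p - 1 - k)! ≡ (-1)^(k + 1) (mod p)`.
-/

/-- Binomial coefficient of integers with the convention `iC n k = 0` when `k < 0` or `k > n`. -/
def iC (n k : ℤ) : ℤ := if 0 ≤ k ∧ k ≤ n then (n.toNat.choose k.toNat : ℤ) else 0

open Nat Finset

theorem iC_natCast (n k : ℕ) : iC n k = n.choose k := by
  unfold iC
  split_ifs with h
  · simp
  · rw [Nat.choose_eq_zero_of_lt (by omega), Nat.cast_zero]

theorem Nat.choose_add_eq_sum_range {m n k : ℕ} (h : n ≤ k) :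
    (m + n).choose k = ∑ j ∈ range (n + 1), m.choose (k - j) * n.choose j := by
  rw [add_comm, Nat.add_choose_eq, Finset.Nat.sum_antidiagonal_eq_sum_range_succ_mk]
  refine (Finset.sum_subset (range_subset_range.2 (by omega)) fun j _ hj => ?_).symm.trans
    (Finset.sum_congr rfl fun j _ => mul_comm _ _)
  rw [Nat.choose_eq_zero_of_lt (by simpa using hj), zero_mul]

theorem Nat.cast_choose_eq_div {F : Type*} [Field F] {a b n : ℕ} (h : a + b = n)
    (hn : (n ! : F) ≠ 0) : (n.choose a : F) = n ! / (a ! * b !) := by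
  have hfac := Nat.choose_mul_factorial_mul_factorial (n := n) (k := a) (by omega)
  rw [show n - a = b by omega] at hfac
  rw [← hfac] at hn ⊢
  push_cast at hn ⊢
  rw [mul_assoc] at hn ⊢
  rw [mul_div_assoc, div_self (right_ne_zero_of_mul hn), mul_one]

theorem Int.dvd_and_not_sq_dvd_of_modEq {p x z : ℤ} (hp : p ≠ 0) (h : x ≡ p * z [ZMOD p ^ 2])
    (hz : ¬ p ∣ z) : p ∣ x ∧ ¬ p ^ 2 ∣ x := by
  have hdiff := h.dvd
  refine ⟨?_, fun hx => hz ?_⟩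
  · simpa using dvd_sub (dvd_mul_right p z) ((dvd_pow_self p two_ne_zero).trans hdiff)
  · rw [← mul_dvd_mul_iff_left hp, ← sq]
    simpa using dvd_add hdiff hx

theorem Int.mul_modEq_mul_of_modEq_mul {p x z u y : ℤ} (h : x ≡ p * z [ZMOD p ^ 2])
    (h' : u * z ≡ y [ZMOD p]) : u * x ≡ p * y [ZMOD p ^ 2] :=
  calc u * x ≡ u * (p * z) [ZMOD p ^ 2] := h.mul_left u
    _ = p * (u * z) := by ring
    _ ≡ p * y [ZMOD p ^ 2] := sq p ▸ h'.mul_left'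

section
variable {p : ℕ} [hp : Fact p.Prime]

theorem ZMod.factorial_ne_zero {n : ℕ} (hn : n < p) : (n ! : ZMod p) ≠ 0 := by
  rw [Ne, ZMod.natCast_eq_zero_iff, hp.out.dvd_factorial]; omega

theorem ZMod.cast_choose_ne_zero {n k : ℕ} (hk : k ≤ n) (hn : n < p) :
    (n.choose k : ZMod p) ≠ 0 := by
  rw [Nat.cast_choose_eq_div (b := n - k) (by omega) (ZMod.factorial_ne_zero hn)]
  exact div_ne_zero (ZMod.factorial_ne_zero hn)
    (mul_ne_zero (ZMod.factorial_ne_zero (by omega)) (ZMod.factorial_ne_zero (by omega)))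

theorem ZMod.factorial_mul_factorial_sub_one_sub {k : ℕ} (hk : k < p) :
    (k ! * (p - 1 - k)! : ZMod p) = (-1) ^ (k + 1) := by
  have h := congrArg (Nat.cast : ℕ → ZMod p)
    (Nat.factorial_mul_descFactorial (n := p - 1) (k := k) (by omega))
  push_cast [ZMod.cast_descFactorial hk.le, ZMod.wilsons_lemma] at h
  have hsq : ((-1 : ZMod p) ^ k) * (-1) ^ k = 1 := by rw [← mul_pow]; simp
  linear_combination (-1) ^ k * h - ((p - 1 - k)! * k ! : ZMod p) * hsq

theorem Nat.choose_mul_add_mul_add_modEq {u v : ℕ} (hu : u < p) (hv : v < p) (A B : ℕ) :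
    (A * p + u).choose (B * p + v) ≡ A.choose B * u.choose v [MOD p] := by
  have hp0 := hp.out.pos
  have := Choose.choose_modEq_choose_mod_mul_choose_div_nat
    (n := A * p + u) (k := B * p + v) (p := p)
  simpa [Nat.mul_add_div hp0, Nat.mod_eq_of_lt, hu, hv, Nat.div_eq_of_lt, mul_comm,
    Nat.mul_add_mod] using this

theorem cast_choose_mul_mul_add {e : ℕ} (he : 0 < e) (hep : e < p) (N K : ℕ) :
    ((N * p).choose (K * p + e) : ZMod (p ^ 2)) = N * (N - 1).choose K * p.choose e := by
  obtain _ | M := N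
  · simp [Nat.choose_eq_zero_of_lt (show 0 < K * p + e by omega)]
  obtain ⟨e, rfl⟩ : ∃ e', e = e' + 1 := ⟨e - 1, by omega⟩
  have hp1 : p - 1 + 1 = p := Nat.sub_add_cancel hp.out.one_le
  have habs : (M + 1) * p * (M * p + (p - 1)).choose (K * p + e) =
      ((M + 1) * p).choose (K * p + e + 1) * (K * p + e + 1) := by
    rw [show (M + 1) * p = M * p + (p - 1) + 1 by rw [add_mul, one_mul]; omega]
    exact Nat.add_one_mul_choose_eq _ _
  have hlucas := (Nat.choose_mul_add_mul_add_modEq (p := p) (u := p - 1) (v := e)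
    (by omega) (by omega) M K).mul_left' p
  have hprime := Nat.add_one_mul_choose_eq (p - 1) e
  rw [hp1] at hprime
  obtain ⟨x, hx⟩ : p ∣ ((M + 1) * p).choose (K * p + e + 1) := by
    have h : p ∣ ((M + 1) * p).choose (K * p + e + 1) * (K * p + e + 1) := by
      rw [← habs]; exact dvd_mul_of_dvd_left (dvd_mul_left p (M + 1)) _
    refine (hp.out.dvd_mul.1 h).resolve_right ?_
    rw [add_assoc, Nat.dvd_add_right (dvd_mul_left p K)]
    exact Nat.not_dvd_of_pos_of_lt (by omega) hep
  have hunit : IsUnit ((e + 1 : ℕ) : ZMod (p ^ 2)) := by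
    rw [ZMod.isUnit_iff_coprime]
    exact Nat.Coprime.pow_right 2 ((Nat.coprime_comm.1 (hp.out.coprime_iff_not_dvd.2
      (Nat.not_dvd_of_pos_of_lt (by omega) hep))))
  have hpp : ((p : ℕ) : ZMod (p ^ 2)) * p = 0 := by
    rw [← Nat.cast_mul, ← sq, ZMod.natCast_self]
  have hl := (ZMod.natCast_eq_natCast_iff _ _ _).2 (sq p ▸ hlucas)
  have habs' := congrArg (Nat.cast : ℕ → ZMod (p ^ 2)) habs
  have hprime' := congrArg (Nat.cast : ℕ → ZMod (p ^ 2)) hprime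
  have hx' := congrArg (Nat.cast : ℕ → ZMod (p ^ 2)) hx
  push_cast at hl habs' hprime' hx' ⊢
  rw [← add_assoc]
  refine hunit.mul_right_cancel ?_
  push_cast
  -- `K p · C((M + 1) p, K p + e + 1)` vanishes mod `p²` because `p` divides the binomial.
  linear_combination -habs' + (M + 1 : ZMod (p ^ 2)) * hl +
    ((M + 1) * M.choose K : ZMod (p ^ 2)) * hprime' - (K * p : ZMod (p ^ 2)) * hx' -
    (K * x : ZMod (p ^ 2)) * hpp

theorem cast_choose_mul_add_mul_add {n₀ k₀ : ℕ} (h : n₀ < k₀) (hk : k₀ < p) (N K : ℕ) :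
    ((N * p + n₀).choose (K * p + k₀) : ZMod (p ^ 2)) =
      N * (N - 1).choose K * (p + n₀).choose k₀ := by
  rw [Nat.choose_add_eq_sum_range (by omega), Nat.choose_add_eq_sum_range h.le]
  push_cast
  rw [Finset.mul_sum]
  refine Finset.sum_congr rfl fun j hj => ?_
  rw [Finset.mem_range] at hj
  rw [show K * p + k₀ - j = K * p + (k₀ - j) by omega,
    cast_choose_mul_mul_add (by omega) (by omega)]
  ring

theorem exists_choose_prime_add_eq_mul {G k : ℕ} (hG : G < k) (hk : k < p) :
    ∃ W, (p + G).choose k = p * W ∧ (W * k ! * (p + G - k)! : ZMod p) = -G ! := by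
  have hnd : ∀ n < p, ¬ p ∣ n ! := fun n hn h => by rw [hp.out.dvd_factorial] at h; omega
  have hfac :
      (p + G).choose k * k ! * (p + G - k)! = p * ((p - 1)! * (p + 1).ascFactorial G) := by
    rw [Nat.choose_mul_factorial_mul_factorial (by omega), ← Nat.factorial_mul_ascFactorial,
      ← Nat.mul_factorial_pred hp.out.ne_zero, mul_assoc]
  obtain ⟨W, hW⟩ : p ∣ (p + G).choose k := by
    rcases hp.out.dvd_mul.1 (hfac ▸ dvd_mul_right p _) with h | h
    · exact (hp.out.dvd_mul.1 h).resolve_right (hnd k hk)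
    · exact absurd h (hnd _ (by omega))
  refine ⟨W, hW, ?_⟩
  have hW' : W * k ! * (p + G - k)! = (p - 1)! * (p + 1).ascFactorial G := by
    rw [hW] at hfac
    exact Nat.eq_of_mul_eq_mul_left hp.out.pos (by rw [← hfac]; ring)
  have hasc : ((p + 1).ascFactorial G : ZMod p) = G ! := by
    rw [Nat.cast_ascFactorial, ← Nat.one_ascFactorial, Nat.cast_ascFactorial, Nat.cast_add,
      ZMod.natCast_self, zero_add]
  have h := congrArg (Nat.cast : ℕ → ZMod p) hW'
  push_cast [hasc, ZMod.wilsons_lemma] at h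
  linear_combination h

theorem exists_choose_modEq_prime_mul {n₀ k₀ L K : ℕ} (h : n₀ < k₀) (hk : k₀ < p) (hL : L < p)
    (hK : K ≤ L) (Q : ℕ) :
    ∃ z : ℤ, (((Q * p + L + 1) * p + n₀).choose (K * p + k₀) : ℤ) ≡ p * z [ZMOD p ^ 2] ∧
      (z * k₀ ! * (p + n₀ - k₀)! : ZMod p) = -((L + 1) * L.choose K * n₀ !) := by
  obtain ⟨W, hV, hW⟩ := exists_choose_prime_add_eq_mul h hk
  set N := Q * p + L + 1
  refine ⟨N * (N - 1).choose K * W, ?_, ?_⟩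
  · have hA := cast_choose_mul_add_mul_add h hk N K
    rw [hV] at hA
    have hmod :
        (N * p + n₀).choose (K * p + k₀) ≡ p * (N * (N - 1).choose K * W) [MOD p ^ 2] :=
      (ZMod.natCast_eq_natCast_iff _ _ _).1 (by rw [hA]; push_cast; ring)
    exact_mod_cast hmod
  · have hlucas := Nat.choose_mul_add_mul_add_modEq hL (hK.trans_lt hL) Q 0
    rw [zero_mul, zero_add, Nat.choose_zero_right, one_mul] at hlucas
    have hN : ((N : ℕ) : ZMod p) = L + 1 := by simp [N]
    rw [show N - 1 = Q * p + L by omega]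
    push_cast [hN, (ZMod.natCast_eq_natCast_iff _ _ _).2 hlucas]
    linear_combination ((L + 1) * L.choose K : ZMod p) * hW

/-- Both sides are `-(S + G + J + I + 1)! / (S! J! I!)` once `(-1)^S (p - 1 - S)! = -1 / S!`. -/
theorem ZMod.cast_choose_identity {A S G J I : ℕ} (hsum : p = A + S + G + J + I + 2) :
    ((S + G).choose S * (S + G + J + I + 1).choose (J + I + 1) : ZMod p) *
        -((J + I + 1) * (J + I).choose J * G !) =
      (-1) ^ S * (S + G + J + I + 1).choose J * (A + G + J + I + 1).choose I *
        ((S + G + I + 1)! * (A + G + J + 1)!) := by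
  have hf : ∀ n < p, (n ! : ZMod p) ≠ 0 := fun n hn => ZMod.factorial_ne_zero hn
  have hr := ZMod.factorial_mul_factorial_sub_one_sub (p := p) (k := S) (by omega)
  rw [show p - 1 - S = A + G + J + I + 1 by omega] at hr
  rw [Nat.cast_choose_eq_div (b := G) rfl (hf _ (by omega)),
    Nat.cast_choose_eq_div (b := S + G) (by ring) (hf _ (by omega)),
    Nat.cast_choose_eq_div (b := I) rfl (hf _ (by omega)),
    Nat.cast_choose_eq_div (b := S + G + I + 1) (by ring) (hf _ (by omega)),
    Nat.cast_choose_eq_div (b := A + G + J + 1) (by ring) (hf _ (by omega))]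
  have h1 := hf (J + I) (by omega)
  have h2 := hf (S + G) (by omega)
  have h3 := hf S (by omega)
  have h4 := hf G (by omega)
  have h5 := hf J (by omega)
  have h6 := hf I (by omega)
  have h7 := hf (J + I + 1) (by omega)
  have h8 := hf (S + G + I + 1) (by omega)
  have h9 := hf (A + G + J + 1) (by omega)
  have hsq : ((-1 : ZMod p) ^ S) * (-1) ^ S = 1 := by rw [← mul_pow]; simp
  rw [Nat.factorial_succ (J + I)] at h7 ⊢
  push_cast at h7 ⊢
  have h0 := left_ne_zero_of_mul h7
  field_simp
  linear_combination -((S + G + J + I + 1)! * (-1) ^ S : ZMod p) * hr +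
    ((S + G + J + I + 1)! : ZMod p) * hsq

theorem choose_dvd_not_sq_dvd_and_modEq {A S G J I Q : ℕ} (hsum : p = A + S + G + J + I + 2)
    {C : ℤ} (hC : C = (((Q * p + (J + I) + 1) * p + G).choose (J * p + (S + G + I + 1)) : ℕ)) :
    ((p : ℤ) ∣ C ∧ ¬ (p : ℤ) ^ 2 ∣ C) ∧
      ((S + G).choose S * (S + G + J + I + 1).choose (J + I + 1) * C : ℤ) ≡
        (-1) ^ S * p * (S + G + J + I + 1).choose J * (A + G + J + I + 1).choose I
        [ZMOD p ^ 2] := by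
  obtain ⟨z, hCz, hz⟩ := exists_choose_modEq_prime_mul (p := p) (n₀ := G)
    (k₀ := S + G + I + 1) (L := J + I) (by omega) (by omega) (by omega) (Nat.le_add_right J I) Q
  rw [show p + G - (S + G + I + 1) = A + G + J + 1 by omega] at hz
  push_cast at hz
  rw [← hC] at hCz
  have hfac : ((S + G + I + 1)! * (A + G + J + 1)! : ZMod p) ≠ 0 :=
    mul_ne_zero (ZMod.factorial_ne_zero (by omega)) (ZMod.factorial_ne_zero (by omega))
  refine ⟨Int.dvd_and_not_sq_dvd_of_modEq (by exact_mod_cast hp.out.ne_zero) hCz ?_, ?_⟩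
  · rw [← ZMod.intCast_zmod_eq_zero_iff_dvd]
    intro hz0
    rw [hz0, zero_mul, zero_mul, eq_comm, neg_eq_zero] at hz
    have hL : (J + I + 1 : ZMod p) ≠ 0 := by
      exact_mod_cast (ZMod.natCast_eq_zero_iff (J + I + 1) p).not.2
        (Nat.not_dvd_of_pos_of_lt (by omega) (by omega))
    have hbinom := ZMod.cast_choose_ne_zero (p := p) (Nat.le_add_right J I) (by omega)
    exact mul_ne_zero (mul_ne_zero hL hbinom) (ZMod.factorial_ne_zero (by omega)) hz
  · rw [mul_comm ((-1 : ℤ) ^ S), mul_assoc (p : ℤ), mul_assoc (p : ℤ)]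
    refine Int.mul_modEq_mul_of_modEq_mul hCz ?_
    rw [← ZMod.intCast_eq_intCast_iff]
    push_cast
    refine mul_right_cancel₀ hfac ?_
    linear_combination
      ((S + G).choose S * (S + G + J + I + 1).choose (J + I + 1) : ZMod p) * hz +
        ZMod.cast_choose_identity hsum
end

theorem stmt_11_general (p : ℕ) (hp : p.Prime)
    (b c m j l r : ℤ) (t d : ℕ)
    (ht : 2 ≤ t)
    (hr : r = b + c * ((p : ℤ) - 1) + (p : ℤ) ^ t * ((p : ℤ) - 1) * (d : ℤ))
    (hbm' : b ≤ m) (hml : m ≤ l) (hlb : l ≤ (p : ℤ) + b - c)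
    (hj1 : 1 ≤ j) (hjc : j ≤ c - 1) :
    ((p : ℤ) ∣ iC (r - l) (b - m + j * ((p : ℤ) - 1)) ∧
      ¬ ((p : ℤ) ^ 2 ∣ iC (r - l) (b - m + j * ((p : ℤ) - 1)))) ∧
    (iC ((p : ℤ) + b - m - c) (l - m) * iC ((p : ℤ) + b - m - 1) (c - 1) *
        iC (r - l) (b - m + j * ((p : ℤ) - 1)) ≡
      (-1 : ℤ) ^ (l - m).toNat * (p : ℤ) * iC ((p : ℤ) + b - m - 1) (j - 1) *
        iC ((p : ℤ) - 1 + m - l) (c - 1 - j)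
      [ZMOD ((p : ℤ) ^ 2)]) := by
  have := Fact.mk hp
  obtain ⟨A, hA⟩ := Int.eq_ofNat_of_zero_le (sub_nonneg.2 hbm')
  obtain ⟨S, hS⟩ := Int.eq_ofNat_of_zero_le (sub_nonneg.2 hml)
  obtain ⟨J, hJ⟩ := Int.eq_ofNat_of_zero_le (sub_nonneg.2 hj1)
  obtain ⟨I, hI⟩ := Int.eq_ofNat_of_zero_le (show 0 ≤ c - 1 - j by omega)
  obtain ⟨G, hG⟩ := Int.eq_ofNat_of_zero_le (show 0 ≤ (p : ℤ) + b - c - l by omega)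
  have hsum : p = A + S + G + J + I + 2 := by omega
  set Q := p ^ (t - 2) * (p - 1) * d
  have hpt : (p : ℤ) ^ t = p ^ (t - 2) * p * p := by
    rw [mul_assoc, ← sq, ← pow_add, Nat.sub_add_cancel ht]
  have hn : r - l = (((Q * p + (J + I) + 1) * p + G : ℕ) : ℤ) := by
    rw [hr]
    push_cast [Q, Nat.cast_sub hp.one_le]
    linear_combination ((p : ℤ) - 1) * d * hpt + hG + (p : ℤ) * hJ + (p : ℤ) * hI
  have hk : b - m + j * ((p : ℤ) - 1) = ((J * p + (S + G + I + 1) : ℕ) : ℤ) := by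
    push_cast
    linear_combination (p : ℤ) * hJ + hS + hG + hI
  rw [hn, hk, show (p : ℤ) + b - m - c = ((S + G : ℕ) : ℤ) by omega,
    show (p : ℤ) + b - m - 1 = ((S + G + J + I + 1 : ℕ) : ℤ) by omega,
    show (p : ℤ) - 1 + m - l = ((A + G + J + I + 1 : ℕ) : ℤ) by omega,
    show c - 1 - j = ((I : ℕ) : ℤ) by omega, show c - 1 = ((J + I + 1 : ℕ) : ℤ) by omega,
    hS, hJ, Int.toNat_natCast]
  simp only [iC_natCast]
  exact choose_dvd_not_sq_dvd_and_modEq hsum rfl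

/-- **Lemma 3.5 (2).** Let `p` be an odd prime, `2 ≤ b ≤ p`, `t ≥ 2`, `d ≥ 0`,
`r = b + c(p−1) + p^t(p−1)d`, `1 ≤ c ≤ p−2`, `0 ≤ m ≤ p−1`, `(b,m) ≠ (p,0)`.
If `b ≤ m ≤ l ≤ p+b−c` and `1 ≤ j ≤ c−1`, then `ν_p(C(r−l, b−m+j(p−1))) = 1` and
`C(p+b−m−c, l−m)·C(p+b−m−1, c−1)·C(r−l, b−m+j(p−1)) ≡
  (−1)^{l−m}·p·C(p+b−m−1, j−1)·C(p−1+m−l, c−1−j)` modulo `p²`. -/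
theorem stmt_11 (p : ℕ) (hp : p.Prime) (hodd : Odd p)
    (b c m j l r : ℤ) (t d : ℕ)
    (hb2 : 2 ≤ b) (hbp : b ≤ (p : ℤ)) (ht : 2 ≤ t)
    (hr : r = b + c * ((p : ℤ) - 1) + (p : ℤ) ^ t * ((p : ℤ) - 1) * (d : ℤ))
    (hc1 : 1 ≤ c) (hcp : c ≤ (p : ℤ) - 2)
    (hm0 : 0 ≤ m) (hmp : m ≤ (p : ℤ) - 1)
    (hbm : ¬ (b = (p : ℤ) ∧ m = 0))
    (hbm' : b ≤ m) (hml : m ≤ l) (hlb : l ≤ (p : ℤ) + b - c)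
    (hj1 : 1 ≤ j) (hjc : j ≤ c - 1) :
    ((p : ℤ) ∣ iC (r - l) (b - m + j * ((p : ℤ) - 1)) ∧
      ¬ ((p : ℤ) ^ 2 ∣ iC (r - l) (b - m + j * ((p : ℤ) - 1)))) ∧
    (iC ((p : ℤ) + b - m - c) (l - m) * iC ((p : ℤ) + b - m - 1) (c - 1) *
        iC (r - l) (b - m + j * ((p : ℤ) - 1)) ≡
      (-1 : ℤ) ^ (l - m).toNat * (p : ℤ) * iC ((p : ℤ) + b - m - 1) (j - 1) *
        iC ((p : ℤ) - 1 + m - l) (c - 1 - j)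
      [ZMOD ((p : ℤ) ^ 2)]) :=
  stmt_11_general p hp b c m j l r t d ht hr hbm' hml hlb hj1 hjc
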